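/- If O is an open subgroup of a totally disconnected locally compact group G and O ∈ E*, then rk(O) ≤ rk(G) whenever G ∈ E*. -/

import Mathlib

/-!
Membership in `E*_α` passes along open embeddings `f : H →* G` of topological groups, by
induction on the derivation: pulling back the normal subgroup, resp. the directed family of
open subgroups, along `f` gives a derivation of the same shape, because the induced map of
quotients is again an open embedding and open subgroups of profinite (resp. discrete) groups
are profinite (resp. discrete). Applied at `α = rk(G)` to the inclusion of `O`, this gives
`O ∈ E*_{rk(G)}`.
-/

universe u

/-- A profinite group: compact, totally disconnected and Hausdorff. -/
def IsProfiniteGrp (G : Type u) [TopologicalSpace G] : Prop :=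
  CompactSpace G ∧ TotallyDisconnectedSpace G ∧ T2Space G

/-- A topological group is compactly generated if it is generated by a compact subset. -/
def CompactlyGeneratedGrp (G : Type u) [Group G] [TopologicalSpace G] : Prop :=
  ∃ K : Set G, IsCompact K ∧ Subgroup.closure K = ⊤

/-- The class `E*`: the smallest class of t.d.l.c. groups containing profinite and discrete
groups, closed under extensions with profinite or discrete quotient, and closed under
directed unions of open subgroups. -/
inductive IsEStar : ∀ (G : Type u) [Group G] [TopologicalSpace G], Prop
  | profinite (G : Type u) [Group G] [TopologicalSpace G] [IsTopologicalGroup G]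
      (h : IsProfiniteGrp G) : IsEStar G
  | discrete (G : Type u) [Group G] [TopologicalSpace G] [IsTopologicalGroup G]
      [DiscreteTopology G] : IsEStar G
  | extension (G : Type u) [Group G] [TopologicalSpace G] [IsTopologicalGroup G]
      (N : Subgroup G) [N.Normal] (hN : IsClosed (N : Set G))
      (hNE : IsEStar N)
      (hQ : IsProfiniteGrp (G ⧸ N) ∨ DiscreteTopology (G ⧸ N)) : IsEStar G
  | directedUnion (G : Type u) [Group G] [TopologicalSpace G] [IsTopologicalGroup G]
      {ι : Type u} (O : ι → Subgroup G)
      (hdir : Directed (· ≤ ·) O)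
      (hopen : ∀ i, IsOpen (O i : Set G))
      (hmem : ∀ i, IsEStar (O i))
      (hcover : ∀ g : G, ∃ i, g ∈ O i) : IsEStar G

/-- The cumulative hierarchy `E*_α` defining the construction rank:
`E*_0` consists of profinite and discrete groups; `E*` is cumulative (monotone in `α`,
which encodes the unions at limit stages); and `G ∈ E*_{α+1}` if `G` is an extension of a
group in `E*_α` with profinite or discrete quotient, or a directed union of open subgroups
lying in `E*_α`. -/
inductive EStarAt : Ordinal.{u} → ∀ (G : Type u) [Group G] [TopologicalSpace G], Prop
  | base (G : Type u) [Group G] [TopologicalSpace G] [IsTopologicalGroup G]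
      (h : IsProfiniteGrp G ∨ DiscreteTopology G) : EStarAt 0 G
  | extension (α : Ordinal.{u}) (G : Type u) [Group G] [TopologicalSpace G] [IsTopologicalGroup G]
      (N : Subgroup G) [N.Normal] (hN : IsClosed (N : Set G))
      (hNE : EStarAt α N)
      (hQ : IsProfiniteGrp (G ⧸ N) ∨ DiscreteTopology (G ⧸ N)) : EStarAt (α + 1) G
  | directedUnion (α : Ordinal.{u}) (G : Type u) [Group G] [TopologicalSpace G]
      [IsTopologicalGroup G] {ι : Type u} (O : ι → Subgroup G)
      (hdir : Directed (· ≤ ·) O)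
      (hopen : ∀ i, IsOpen (O i : Set G))
      (hmem : ∀ i, EStarAt α (O i))
      (hcover : ∀ g : G, ∃ i, g ∈ O i) : EStarAt (α + 1) G
  | mono {α β : Ordinal.{u}} (h : α ≤ β) (G : Type u) [Group G] [TopologicalSpace G]
      (hG : EStarAt α G) : EStarAt β G

/-- The construction rank: the least `α` with `G ∈ E*_α`. -/
noncomputable def eStarRank (G : Type u) [Group G] [TopologicalSpace G] : Ordinal.{u} :=
  sInf {α | EStarAt α G}

open Topology

section OpenEmbedding

variable {H G : Type*} [Group H] [TopologicalSpace H] [Group G] [TopologicalSpace G]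
  {f : H →* G}

lemma MonoidHom.isOpenEmbedding_subgroupComap (hf : IsOpenEmbedding f) (K : Subgroup G) :
    IsOpenEmbedding (f.subgroupComap K) :=
  hf.restrictPreimage (K : Set G)

lemma MonoidHom.isOpenEmbedding_quotientMap [IsTopologicalGroup H] [IsTopologicalGroup G]
    (hf : IsOpenEmbedding f) (N : Subgroup G) [N.Normal] :
    IsOpenEmbedding (QuotientGroup.map (N.comap f) N f le_rfl) := by
  set q := QuotientGroup.map (N.comap f) N f le_rfl
  have hq : q ∘ QuotientGroup.mk = QuotientGroup.mk ∘ f := rfl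
  have hcont : Continuous q := by
    rw [← QuotientGroup.isOpenQuotientMap_mk.continuous_comp_iff, hq]
    exact continuous_quot_mk.comp hf.continuous
  have hinj : Function.Injective q := by
    rintro ⟨a⟩ ⟨b⟩ hab
    refine QuotientGroup.eq.mpr ?_
    simpa only [Subgroup.mem_comap, map_mul, map_inv] using QuotientGroup.eq.mp hab
  refine .of_continuous_injective_isOpenMap hcont hinj ?_
  refine .of_comp continuous_quot_mk QuotientGroup.mk_surjective (f := QuotientGroup.mk) ?_
  rw [hq]
  exact QuotientGroup.isOpenMap_coe.comp hf.isOpenMap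

lemma IsProfiniteGrp.of_isOpenEmbedding [IsTopologicalGroup G] (hG : IsProfiniteGrp G)
    (hf : IsOpenEmbedding f) : IsProfiniteGrp H := by
  obtain ⟨_, _, _⟩ := hG
  have hclosed : IsClosed (Set.range f) :=
    f.range.isClosed_of_isOpen hf.isOpen_range
  refine ⟨(IsClosedEmbedding.mk hf.isEmbedding hclosed).compactSpace, ?_,
    hf.isEmbedding.t2Space⟩
  exact hf.isEmbedding.isTotallyDisconnected_range.mp
    (isTotallyDisconnected_of_totallyDisconnectedSpace _)

lemma profinite_or_discrete_of_isOpenEmbedding [IsTopologicalGroup G]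
    (hf : IsOpenEmbedding f) (hG : IsProfiniteGrp G ∨ DiscreteTopology G) :
    IsProfiniteGrp H ∨ DiscreteTopology H :=
  hG.imp (·.of_isOpenEmbedding hf) fun (_ : DiscreteTopology G) ↦ hf.isEmbedding.discreteTopology

end OpenEmbedding

theorem EStarAt.of_isOpenEmbedding {α : Ordinal.{u}} {G : Type u} [Group G] [TopologicalSpace G]
    (hG : EStarAt α G) {H : Type u} [Group H] [TopologicalSpace H] [IsTopologicalGroup H]
    (f : H →* G) (hf : IsOpenEmbedding f) : EStarAt α H := by
  induction hG generalizing H with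
  | base G h => exact .base H (profinite_or_discrete_of_isOpenEmbedding hf h)
  | extension α G N hN _ hQ ih =>
    exact .extension α H (N.comap f) (hN.preimage hf.continuous)
      (ih _ (f.isOpenEmbedding_subgroupComap hf N))
      (profinite_or_discrete_of_isOpenEmbedding (f.isOpenEmbedding_quotientMap hf N) hQ)
  | directedUnion α G O hdir hopen _ hcover ih =>
    refine .directedUnion α H (fun i ↦ (O i).comap f) ?_
      (fun i ↦ (hopen i).preimage hf.continuous)
      (fun i ↦ ih i _ (f.isOpenEmbedding_subgroupComap hf (O i))) fun h ↦ hcover (f h)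
    exact hdir.mono_comp (· ≤ ·) fun _ _ ↦ Subgroup.comap_mono
  | mono hle G _ ih => exact .mono hle H (ih f hf)

theorem eStarAt_eStarRank {G : Type u} [Group G] [TopologicalSpace G]
    (hG : ∃ α : Ordinal.{u}, EStarAt α G) : EStarAt (eStarRank G) G :=
  csInf_mem hG

theorem eStarRank_le {G : Type u} [Group G] [TopologicalSpace G] {α : Ordinal.{u}}
    (hG : EStarAt α G) : eStarRank G ≤ α :=
  csInf_le' hG

theorem eStarRank_openSubgroup_le_general (G : Type u) [Group G] [TopologicalSpace G]
    [IsTopologicalGroup G]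
    (O : Subgroup G) (hO : IsOpen (O : Set G))
    (hGmem : ∃ α : Ordinal.{u}, EStarAt α G) :
    eStarRank (↥O) ≤ eStarRank G :=
  eStarRank_le <|
    (eStarAt_eStarRank hGmem).of_isOpenEmbedding O.subtype hO.isOpenEmbedding_subtypeVal

/-- If `O` is an open subgroup of `G` with both `O, G ∈ E*`, then `rk(O) ≤ rk(G)`. -/
theorem eStarRank_openSubgroup_le (G : Type u) [Group G] [TopologicalSpace G]
    [IsTopologicalGroup G] [LocallyCompactSpace G] [TotallyDisconnectedSpace G] [T2Space G]
    (O : Subgroup G) (hO : IsOpen (O : Set G))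
    (hOmem : ∃ α : Ordinal.{u}, EStarAt α (↥O)) (hGmem : ∃ α : Ordinal.{u}, EStarAt α G) :
    eStarRank (↥O) ≤ eStarRank G :=
  eStarRank_openSubgroup_le_general G O hO hGmem
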